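/- For each integer d ≥ 2, each k ∈ {0,…,d−2}, and each rational p/q in lowest terms with 0 < p < q, there is exactly one orbit of the map σ_d : t ↦ dt (mod 1) that is entirely contained in the open arc A_k = (k/(d−1), (k+1)/(d−1)) and has angular rotation number p/q. -/

import Mathlib

/-- The open arc of the circle `ℝ/ℤ` which is the projection of the real interval `(a,b)`. -/
def Arc (a b : ℝ) : Set (AddCircle (1 : ℝ)) :=
  (fun x : ℝ => ((x : ℝ) : AddCircle (1 : ℝ))) '' Set.Ioo a b

/-- A labelling `L` of points of `ℝ/ℤ` listed in counterclockwise cyclic order. -/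
def IsCyclicList {q : ℕ} [NeZero q] (L : Fin q → AddCircle (1 : ℝ)) : Prop :=
  ∃ x : Fin q → ℝ, StrictMono x ∧ (∀ i, x i < x 0 + 1) ∧
    ∀ i, ((x i : ℝ) : AddCircle (1 : ℝ)) = L i

/-- A `q`-point set `s ⊆ ℝ/ℤ` has angular rotation number `p/q` under `t ↦ d·t`:
listed in cyclic order, the map shifts the points by `p` positions. -/
def SetRotNum (d p q : ℕ) [NeZero q] (s : Set (AddCircle (1 : ℝ))) : Prop :=
  ∃ L : Fin q → AddCircle (1 : ℝ), IsCyclicList L ∧ Set.range L = s ∧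
    ∀ i, (d : ℕ) • L i = L (i + (Fin.ofNat q p))


/-!
Lift the orbit into `A_k` as `k/(d-1) + w_j` with `w` increasing. Since `d·k/(d-1) ≡ k/(d-1)`
mod 1, the orbit condition reads `d·w_j = w_{j+p} + ε_j` with `ε_j ∈ {0, 1}`, and the order of
the points forces `ε_j` to be the carry of `j ↦ j + p` in `ℤ/q`. The system `d·u = u ∘ σ + f`
has exactly one solution, because `u ↦ d·u - u ∘ σ` is injective (it expands a maximum of
`|u|`). For existence, a minimum principle for this system (with `f ≥ 0` and `σ` transitive,
which is where `gcd(p, q) = 1` enters) applied to `w`, to `1/(d-1) - w` and to the cyclic gaps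
of `w` shows that the solution is increasing and lies in `(0, 1/(d-1))`.
-/

open Set Fin.NatCast

section ExpandingEquation

variable {ι : Type*} [Finite ι] (σ : ι → ι) {d : ℝ}

lemma eq_zero_of_forall_mul_eq_comp (hd : 1 < d) {u : ι → ℝ} (h : ∀ i, d * u i = u (σ i)) :
    u = 0 := by
  cases isEmpty_or_nonempty ι
  · exact Subsingleton.elim _ _
  obtain ⟨m, hm⟩ := Finite.exists_max fun i => |u i|
  have hm0 : |u m| ≤ 0 := by
    have : d * |u m| ≤ |u m| := by
      rw [← abs_of_pos (zero_lt_one.trans hd), ← abs_mul, h]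
      exact hm _
    nlinarith [abs_nonneg (u m)]
  funext i
  exact abs_nonpos_iff.1 ((hm i).trans hm0)

lemma existsUnique_mul_eq_comp_add (hd : 1 < d) (f : ι → ℝ) :
    ∃! u : ι → ℝ, ∀ i, d * u i = u (σ i) + f i := by
  let T : (ι → ℝ) →ₗ[ℝ] ι → ℝ := d • LinearMap.id - LinearMap.funLeft ℝ ℝ σ
  have hT : ∀ u i, T u i = d * u i - u (σ i) := fun _ _ => rfl
  have hinj : Function.Injective T := (injective_iff_map_eq_zero T).2 fun u hu =>
    eq_zero_of_forall_mul_eq_comp σ hd fun i => by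
      have := congrFun hu i
      rw [hT, Pi.zero_apply] at this
      linarith
  obtain ⟨u, hu⟩ := LinearMap.injective_iff_surjective.1 hinj f
  refine ⟨u, fun i => by linarith [hT u i, congrFun hu i], fun v hv => hinj ?_⟩
  funext i
  linarith [hT u i, hT v i, congrFun hu i, hv i]

lemma pos_of_forall_mul_eq_comp_add (i₀ : ι) (hσ : ∀ i, ∃ n, σ^[n] i = i₀) (hd : 1 ≤ d)
    {u f : ι → ℝ} (hf : ∀ i, 0 ≤ f i) (hf₀ : 0 < f i₀) (h : ∀ i, d * u i = u (σ i) + f i)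
    (i : ι) : 0 < u i := by
  by_contra! hi
  have : Nonempty ι := ⟨i⟩
  obtain ⟨m, hm⟩ := Finite.exists_min u
  -- a nonpositive minimum of `u` moves along the orbit of `σ`, and `f` vanishes there
  have step : ∀ j, (∀ l, u j ≤ u l) → u j ≤ 0 →
      f j = 0 ∧ (∀ l, u (σ j) ≤ u l) ∧ u (σ j) ≤ 0 := by
    intro j hj hj0
    have hfj : f j = 0 := by nlinarith [h j, hj (σ j), hf j]
    exact ⟨hfj, fun l => by nlinarith [h j, hj l], by nlinarith [h j]⟩
  have orbit : ∀ n, (∀ l, u (σ^[n] m) ≤ u l) ∧ u (σ^[n] m) ≤ 0 := by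
    intro n
    induction n with
    | zero => exact ⟨hm, (hm i).trans hi⟩
    | succ n ih =>
      rw [Function.iterate_succ_apply']
      exact (step _ ih.1 ih.2).2
  obtain ⟨n, hn⟩ := hσ m
  have := (step _ (orbit n).1 (orbit n).2).1
  rw [hn] at this
  linarith

end ExpandingEquation

lemma val_iterate_add_natCast {q : ℕ} [NeZero q] (p : ℕ) (i : Fin q) (n : ℕ) :
    ((· + (p : Fin q))^[n] i : ℕ) = (i + n * p) % q := by
  induction n with
  | zero => simp [Nat.mod_eq_of_lt i.isLt]
  | succ n ih =>
    rw [Function.iterate_succ_apply', Fin.val_add, ih, Fin.val_natCast, ← Nat.add_mod, add_assoc,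
      add_one_mul]

lemma exists_iterate_add_eq {p q : ℕ} [NeZero q] (hpq : Nat.Coprime p q) (i i₀ : Fin q) :
    ∃ n, (· + (p : Fin q))^[n] i = i₀ := by
  obtain ⟨n, -, hn⟩ := Nat.exists_mul_mod_eq_of_coprime (i₀ + (q - i)) hpq (NeZero.ne q)
  refine ⟨n, Fin.ext ?_⟩
  have := i.isLt
  rw [val_iterate_add_natCast, Nat.add_mod, mul_comm, hn, ← Nat.add_mod,
    show (i : ℕ) + (i₀ + (q - i)) = i₀ + q by omega, Nat.add_mod_right, Nat.mod_eq_of_lt i₀.isLt]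

lemma Fin.strictMono_of_lt_add_one {α : Type*} [Preorder α] {q : ℕ} [NeZero q] {f : Fin q → α}
    (h : ∀ j : Fin q, (j : ℕ) + 1 < q → f j < f (j + 1)) : StrictMono f := by
  obtain ⟨n, rfl⟩ := Nat.exists_eq_succ_of_ne_zero (NeZero.ne q)
  exact Fin.strictMono_iff_lt_succ.2 fun i => by
    simpa [Fin.coeSucc_eq_succ] using h i.castSucc (by simp)

def carry {q : ℕ} (p : ℕ) (j : Fin q) : ℕ := if q ≤ (j : ℕ) + p then 1 else 0

lemma carry_add_carry_comm {q m p : ℕ} [NeZero q] (hm : m < q) (hp : p < q) (j : Fin q) :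
    carry m j + carry p (j + (m : Fin q)) = carry p j + carry m (j + (p : Fin q)) := by
  have := j.isLt
  unfold carry
  rw [Fin.val_add_eq_ite, Fin.val_add_eq_ite, Fin.val_natCast, Fin.val_natCast,
    Nat.mod_eq_of_lt hm, Nat.mod_eq_of_lt hp]
  split_ifs <;> omega

lemma mul_div_sub_one {d : ℝ} (hd : d ≠ 1) (a : ℝ) : d * (a / (d - 1)) = a / (d - 1) + a := by
  field_simp [sub_ne_zero.2 hd]
  ring

lemma one_div_sub_one_le_one {d : ℝ} (hd : 2 ≤ d) : 1 / (d - 1) ≤ 1 := by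
  rw [div_le_one (by linarith)]
  linarith

lemma mul_eq_add_ite_of_mem_Ioo {d x y : ℝ} (hd : 2 ≤ d) (hx : x ∈ Ioo 0 (1 / (d - 1)))
    (hy : y ∈ Ioo 0 (1 / (d - 1))) (h : ∃ n : ℤ, d * x = y + n) :
    d * x = y + if 1 < d * x then 1 else 0 := by
  obtain ⟨n, hn⟩ := h
  have hd1 := one_div_sub_one_le_one hd
  have hdx : d * x < 1 / (d - 1) + 1 := by
    rw [← mul_div_sub_one (by linarith)]
    exact mul_lt_mul_of_pos_left hx.2 (by linarith)
  have hdx0 : 0 < d * x := mul_pos (by linarith) hx.1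
  rw [hn]
  split_ifs with h
  · obtain ⟨h0, h2⟩ : (0 : ℝ) < n ∧ (n : ℝ) < 2 := ⟨by linarith [hy.2], by linarith [hy.1]⟩
    rw [show n = 1 by norm_cast at h0 h2; omega, Int.cast_one]
  · obtain ⟨h0, h1⟩ : (-1 : ℝ) < n ∧ (n : ℝ) < 1 := ⟨by linarith [hy.2], by linarith [hy.1]⟩
    rw [show n = 0 by norm_cast at h0 h1; omega, Int.cast_zero]

section RotationOrbit

variable {d : ℝ} {p q : ℕ} [NeZero q] {w : Fin q → ℝ}

lemma mem_Ioo_of_mul_eq_add_carry (hd : 2 ≤ d) (hp0 : 0 < p) (hpq : p < q)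
    (hgcd : Nat.gcd p q = 1) (hw : ∀ j, d * w j = w (j + p) + carry p j) (j : Fin q) :
    w j ∈ Ioo 0 (1 / (d - 1)) := by
  have hreach (i₀ : Fin q) (i : Fin q) := exists_iterate_add_eq hgcd i i₀
  have hcarry (i : Fin q) : (carry p i : ℝ) ≤ 1 := by unfold carry; split_ifs <;> simp
  constructor
  · refine pos_of_forall_mul_eq_comp_add _ ⟨q - p, by omega⟩ (hreach _) (by linarith)
      (fun _ => Nat.cast_nonneg _) (by rw [carry, if_pos (by dsimp only; omega)]; norm_num) hw j
  · have := pos_of_forall_mul_eq_comp_add _ 0 (hreach 0) (d := d) (by linarith)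
      (u := fun i => 1 / (d - 1) - w i) (f := fun i : Fin q => 1 - (carry p i : ℝ))
      (fun i => by linarith [hcarry i]) (by rw [carry, if_neg (by simp; omega)]; norm_num)
      (fun i => by rw [mul_sub, mul_div_sub_one (by linarith)]; linarith [hw i]) j
    linarith

lemma strictMono_of_mul_eq_add_carry (hd : 2 ≤ d) (hp0 : 0 < p) (hpq : p < q)
    (hgcd : Nat.gcd p q = 1) (hw : ∀ j, d * w j = w (j + p) + carry p j) : StrictMono w := by
  -- the gaps between cyclically consecutive points solve an equation of the same shape
  let g (j : Fin q) : ℝ := w (j + 1) - w j + carry 1 j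
  have hg (j : Fin q) : d * g j = g (j + p) + (d - 1) * carry 1 j := by
    have hco : (carry 1 j : ℝ) + carry p (j + 1) = carry p j + carry 1 (j + (p : Fin q)) := by
      exact_mod_cast (by simpa using carry_add_carry_comm (m := 1) (by omega) hpq j)
    have h1 := hw (j + 1)
    rw [add_right_comm] at h1
    simp only [g]
    linear_combination h1 - hw j + hco
  have hgpos := pos_of_forall_mul_eq_comp_add _ ⟨q - 1, by omega⟩
    (fun i => exists_iterate_add_eq hgcd i _) (by linarith) (u := g)
    (fun i => mul_nonneg (by linarith) (Nat.cast_nonneg _))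
    (by rw [carry, if_pos (by dsimp only; omega)]; norm_num; linarith) hg
  refine Fin.strictMono_of_lt_add_one fun j hj => ?_
  have := hgpos j
  simp only [g, carry, if_neg (not_le.2 hj), Nat.cast_zero] at this
  linarith

lemma mul_eq_add_carry_of_strictMono (hd : 2 ≤ d) (hp0 : 0 < p) (hpq : p < q)
    (hw : StrictMono w) (hmem : ∀ j, w j ∈ Ioo 0 (1 / (d - 1)))
    (hint : ∀ j, ∃ n : ℤ, d * w j = w (j + p) + n) (j : Fin q) :
    d * w j = w (j + p) + carry p j := by
  have hjump (j : Fin q) := mul_eq_add_ite_of_mem_Ioo hd (hmem j) (hmem (j + p)) (hint j)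
  have hdw : StrictMono fun j => d * w j := fun _ _ h => mul_lt_mul_of_pos_left (hw h) (by linarith)
  have hpv : ((p : Fin q) : ℕ) = p := by rw [Fin.val_natCast, Nat.mod_eq_of_lt hpq]
  let j₁ : Fin q := ⟨q - p - 1, by omega⟩
  let j₂ : Fin q := ⟨q - p, by omega⟩
  let last : Fin q := ⟨q - 1, by omega⟩
  have hj₁ : j₁ + p = last := Fin.ext <| by
    rw [Fin.val_add_eq_ite, hpv]
    dsimp only [j₁, last]
    split_ifs <;> omega
  have hj₂ : j₂ + p = 0 := Fin.ext <| by
    rw [Fin.val_add_eq_ite, hpv]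
    dsimp only [j₂]
    split_ifs <;> simp <;> omega
  have hlast : w 0 < w last := hw (by simp [Fin.lt_def, last]; omega)
  have h₁₂ : d * w j₁ < d * w j₂ := hdw (by simp [Fin.lt_def, j₁, j₂]; omega)
  -- `j₁ ↦ last` and `j₂ ↦ 0` reverse the order, so exactly one of them carries
  have h₂ : 1 < d * w j₂ := by
    by_contra h
    have e₂ := hjump j₂
    have e₁ := hjump j₁
    rw [if_neg h, hj₂] at e₂
    rw [if_neg (by linarith), hj₁] at e₁
    linarith
  have h₁ : d * w j₁ ≤ 1 := by
    by_contra h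
    have e₂ := hjump j₂
    have e₁ := hjump j₁
    rw [if_pos h₂, hj₂] at e₂
    rw [if_pos (by linarith), hj₁] at e₁
    linarith
  rw [hjump j, carry]
  split_ifs with h h'
  · simp
  · exact absurd h (not_lt.2 (h₁.trans' (hdw.monotone (by simp [Fin.le_def, j₁]; omega))))
  · exact absurd (h₂.trans_le (hdw.monotone (by simp [Fin.le_def, j₂]; omega))) h
  · simp

end RotationOrbit

lemma strictMono_fract_sub_of_cyclic {q : ℕ} [NeZero q] {x : Fin q → ℝ} (hx : StrictMono x)
    (hx1 : ∀ i, x i < x 0 + 1) (c : Fin q) :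
    StrictMono fun j => Int.fract (x (j + c) - x c) := by
  have hfract (i : Fin q) : Int.fract (x i - x c) = x i - x c + if c ≤ i then 0 else 1 := by
    rw [Int.fract_eq_iff]
    split_ifs with h
    · exact ⟨by linarith [hx.monotone h], by linarith [hx1 i, hx.monotone (Fin.zero_le c)], 0,
        by simp⟩
    · exact ⟨by linarith [hx1 c, hx.monotone (Fin.zero_le i)], by linarith [hx (not_le.1 h)],
        -1, by simp⟩
  intro j j' hjj'
  have hj := Fin.val_add_eq_ite j c
  have hj' := Fin.val_add_eq_ite j' c
  rw [Fin.lt_def] at hjj'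
  simp only [hfract, Fin.le_def]
  have hx0 := hx.monotone (Fin.zero_le (j' + c))
  have := hx1 (j + c)
  split_ifs at hj hj' ⊢ <;>
    first
    | omega
    | linarith
    | linarith [hx (show j + c < j' + c by rw [Fin.lt_def]; omega)]

lemma exists_strictMono_comp_add_of_cyclic {q : ℕ} [NeZero q] {x y : Fin q → ℝ}
    (hx : StrictMono x) (hx1 : ∀ i, x i < x 0 + 1) (hxy : ∀ i, ∃ n : ℤ, y i = x i + n)
    (hy : ∀ i j, y i < y j + 1) : ∃ c, StrictMono fun j => y (j + c) := by
  obtain ⟨c, hc⟩ := Finite.exists_min y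
  have key (j : Fin q) : Int.fract (x (j + c) - x c) = y (j + c) - y c := by
    obtain ⟨n, hn⟩ := hxy (j + c)
    obtain ⟨m, hm⟩ := hxy c
    exact Int.fract_eq_iff.2 ⟨sub_nonneg.2 (hc _), by linarith [hy (j + c) c], m - n,
      by rw [hn, hm]; push_cast; ring⟩
  refine ⟨c, fun j j' h => ?_⟩
  have := strictMono_fract_sub_of_cyclic hx hx1 c h
  simp only [key] at this
  linarith

lemma AddCircle.coe_eq_coe_iff_exists_int {x y : ℝ} :
    (x : AddCircle (1 : ℝ)) = y ↔ ∃ n : ℤ, x = y + n := by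
  rw [QuotientAddGroup.eq_iff_sub_mem, AddSubgroup.mem_zmultiples_iff]
  simp only [zsmul_eq_mul, mul_one]
  exact ⟨fun ⟨n, hn⟩ => ⟨n, by linarith⟩, fun ⟨n, hn⟩ => ⟨n, by linarith⟩⟩

section Arc

variable {d p q k : ℕ} [NeZero q]

lemma setRotNum_range_of_mul_eq_add_carry (hd : (2 : ℝ) ≤ d) {w : Fin q → ℝ} (hmono : StrictMono w)
    (hmem : ∀ j, w j ∈ Ioo 0 (1 / ((d : ℝ) - 1)))
    (hw : ∀ j, (d : ℝ) * w j = w (j + p) + carry p j) :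
    SetRotNum d p q (range fun j => ((k / ((d : ℝ) - 1) + w j : ℝ) : AddCircle (1 : ℝ))) ∧
      range (fun j => ((k / ((d : ℝ) - 1) + w j : ℝ) : AddCircle (1 : ℝ))) ⊆
        Arc (k / ((d : ℝ) - 1)) ((k + 1) / ((d : ℝ) - 1)) := by
  have hd1 := one_div_sub_one_le_one hd
  have hdk := mul_div_sub_one (show (d : ℝ) ≠ 1 by linarith) k
  refine ⟨⟨_, ⟨fun j => k / ((d : ℝ) - 1) + w j, fun i j h => by simpa using hmono h,
    fun i => by linarith [(hmem i).2, (hmem 0).1], fun _ => rfl⟩, rfl, fun i => ?_⟩, ?_⟩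
  · rw [Fin.ofNat_eq_cast, ← AddCircle.coe_nsmul, nsmul_eq_mul,
      AddCircle.coe_eq_coe_iff_exists_int]
    exact ⟨k + carry p i, by push_cast; linear_combination hdk + hw i⟩
  · rintro _ ⟨j, rfl⟩
    exact ⟨_, ⟨by linarith [(hmem j).1], by rw [add_div]; linarith [(hmem j).2]⟩, rfl⟩

lemma exists_strictMono_lift_of_setRotNum (hd : (2 : ℝ) ≤ d) {s : Set (AddCircle (1 : ℝ))}
    (hs : SetRotNum d p q s) (hsub : s ⊆ Arc (k / ((d : ℝ) - 1)) ((k + 1) / ((d : ℝ) - 1))) :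
    ∃ w : Fin q → ℝ, StrictMono w ∧ (∀ j, w j ∈ Ioo 0 (1 / ((d : ℝ) - 1))) ∧
      (∀ j, ∃ n : ℤ, (d : ℝ) * w j = w (j + p) + n) ∧
      s = range fun j => ((k / ((d : ℝ) - 1) + w j : ℝ) : AddCircle (1 : ℝ)) := by
  have hd1 := one_div_sub_one_le_one hd
  have hdk := mul_div_sub_one (show (d : ℝ) ≠ 1 by linarith) k
  set a := (k : ℝ) / ((d : ℝ) - 1)
  have hab : ((k : ℝ) + 1) / ((d : ℝ) - 1) = a + 1 / ((d : ℝ) - 1) := add_div _ _ _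
  obtain ⟨L, ⟨x, hx, hx1, hxL⟩, rfl, hrot⟩ := hs
  choose y hy hyL using fun i => hsub ⟨i, rfl⟩
  rw [hab] at hy
  obtain ⟨c, hc⟩ := exists_strictMono_comp_add_of_cyclic hx hx1
    (fun i => AddCircle.coe_eq_coe_iff_exists_int.1 ((hyL i).trans (hxL i).symm))
    (fun i j => by linarith [(hy i).2, (hy j).1])
  refine ⟨fun j => y (j + c) - a, fun i j h => by simpa using hc h,
    fun j => ⟨by linarith [(hy (j + c)).1], by linarith [(hy (j + c)).2]⟩, fun j => ?_, ?_⟩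
  · have h := hrot (j + c)
    rw [Fin.ofNat_eq_cast, add_right_comm, ← hyL, ← hyL, ← AddCircle.coe_nsmul, nsmul_eq_mul,
      AddCircle.coe_eq_coe_iff_exists_int] at h
    obtain ⟨n, hn⟩ := h
    exact ⟨n - k, by push_cast; linear_combination hn - hdk⟩
  · rw [← (Equiv.addRight c).surjective.range_comp]
    congr 1
    funext j
    simp [← hyL]

end Arc

theorem stmt8_general (d p q k : ℕ) [NeZero q] (hd : 2 ≤ d)
    (hp0 : 0 < p) (hpq : p < q) (hgcd : Nat.gcd p q = 1) :
    ∃! s : Set (AddCircle (1 : ℝ)), SetRotNum d p q s ∧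
      s ⊆ Arc ((k : ℝ) / ((d : ℝ) - 1) : ℝ) (((k : ℝ) + 1) / ((d : ℝ) - 1) : ℝ) := by
  have hd' : (2 : ℝ) ≤ d := by exact_mod_cast hd
  obtain ⟨w, hw, hw_unique⟩ := existsUnique_mul_eq_comp_add (· + (p : Fin q))
    (by linarith : (1 : ℝ) < d) fun j => (carry p j : ℝ)
  refine ⟨_, setRotNum_range_of_mul_eq_add_carry hd'
    (strictMono_of_mul_eq_add_carry hd' hp0 hpq hgcd hw)
    (mem_Ioo_of_mul_eq_add_carry hd' hp0 hpq hgcd hw) hw, fun s ⟨hs, hsub⟩ => ?_⟩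
  obtain ⟨v, hv, hvmem, hvint, rfl⟩ := exists_strictMono_lift_of_setRotNum hd' hs hsub
  rw [hw_unique v (mul_eq_add_carry_of_strictMono hd' hp0 hpq hv hvmem hvint)]

/-- For each `d ≥ 2`, each `k ∈ {0,…,d−2}`, and each `p/q` in lowest terms with
`0 < p < q`, there is exactly one orbit of `σ_d : t ↦ d·t (mod 1)` entirely contained
in the open arc `A_k = (k/(d−1), (k+1)/(d−1))` and having angular rotation number `p/q`. -/
theorem stmt8 (d p q k : ℕ) [NeZero q] (hd : 2 ≤ d) (hk : k ≤ d - 2)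
    (hp0 : 0 < p) (hpq : p < q) (hgcd : Nat.gcd p q = 1) :
    ∃! s : Set (AddCircle (1 : ℝ)), SetRotNum d p q s ∧
      s ⊆ Arc ((k : ℝ) / ((d : ℝ) - 1) : ℝ) (((k : ℝ) + 1) / ((d : ℝ) - 1) : ℝ) :=
  stmt8_general d p q k hd hp0 hpq hgcd
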